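/- arXiv:2112.13334 — 4 statements merged into one kernel-verified Lean document; each statement's English description precedes it below -/
import Mathlib

section
/- Let G be a graph with Δ(G) ≤ k − 1 for some k ≥ 11, and suppose G has a vertex v of degree 1 such that G − v has a nice k-coloring. Then G has a nice k-coloring. -/
open SimpleGraph

/-- The degree of a vertex `v` in a graph `G` (number of neighbors). -/
noncomputable def deg {V : Type*} (G : SimpleGraph V) (v : V) : ℕ :=
  (G.neighborSet v).ncard

/-- The maximum degree `Δ(G)` of a finite graph. -/
noncomputable def maxDeg {V : Type*} [Fintype V] (G : SimpleGraph V) : ℕ :=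
  Finset.univ.sup (deg G)

/-- A total `k`-coloring of `G`: a coloring of vertices (`cv`) and edges (`ce`) with `k`
colors such that no two adjacent vertices, no two incident edges, and no vertex and
incident edge receive the same color. -/
def IsTotalColoring {V : Type*} (G : SimpleGraph V) (k : ℕ)
    (cv : V → Fin k) (ce : Sym2 V → Fin k) : Prop :=
  (∀ u v, G.Adj u v → cv u ≠ cv v) ∧
  (∀ u v w, G.Adj u v → G.Adj u w → v ≠ w → ce s(u, v) ≠ ce s(u, w)) ∧
  (∀ u v, G.Adj u v → cv u ≠ ce s(u, v))

def HasTotalColoring {V : Type*} (G : SimpleGraph V) (k : ℕ) : Prop :=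
  ∃ cv ce, IsTotalColoring G k cv ce

/-- The total chromatic number `χ''(G)`: the least `k` admitting a total `k`-coloring. -/
noncomputable def totalChromaticNumber {V : Type*} (G : SimpleGraph V) : ℕ :=
  sInf {k | HasTotalColoring G k}

/-- `H` is a minor of `G`: there are pairwise disjoint nonempty connected branch sets in `G`,
one for each vertex of `H`, with an edge of `G` between the branch sets of any two
vertices adjacent in `H`. -/
def HasMinor {V W : Type*} (G : SimpleGraph V) (H : SimpleGraph W) : Prop :=
  ∃ φ : W → Set V,
    (∀ w, (G.induce (φ w)).Connected) ∧
    (∀ w₁ w₂, w₁ ≠ w₂ → Disjoint (φ w₁) (φ w₂)) ∧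
    (∀ w₁ w₂, H.Adj w₁ w₂ → ∃ u ∈ φ w₁, ∃ v ∈ φ w₂, G.Adj u v)

abbrev K5 : SimpleGraph (Fin 5) := ⊤

abbrev K33 : SimpleGraph (Fin 3 ⊕ Fin 3) := completeBipartiteGraph (Fin 3) (Fin 3)

/-- A nice `k`-coloring: a proper coloring of all edges and of all vertices of degree at
least `6`, such that no two adjacent or incident colored elements share a color. -/
def IsNiceColoring {V : Type*} (G : SimpleGraph V) (k : ℕ)
    (cv : V → Fin k) (ce : Sym2 V → Fin k) : Prop :=
  (∀ u v, G.Adj u v → 6 ≤ deg G u → 6 ≤ deg G v → cv u ≠ cv v) ∧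
  (∀ u v w, G.Adj u v → G.Adj u w → v ≠ w → ce s(u, v) ≠ ce s(u, w)) ∧
  (∀ u v, G.Adj u v → 6 ≤ deg G u → cv u ≠ ce s(u, v))

def HasNiceColoring {V : Type*} (G : SimpleGraph V) (k : ℕ) : Prop :=
  ∃ cv ce, IsNiceColoring G k cv ce

/-- A color `c` is missing at `v` if it is used neither on `v` (when `v` is colored,
i.e. has degree at least 6) nor on any edge incident with `v`. -/
def MissingAt {V : Type*} {k : ℕ} (G : SimpleGraph V)
    (cv : V → Fin k) (ce : Sym2 V → Fin k) (v : V) (c : Fin k) : Prop :=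
  (6 ≤ deg G v → cv v ≠ c) ∧ ∀ w, G.Adj v w → ce s(v, w) ≠ c

/-- `G` is planar: it has a drawing in the plane with injective vertex placement and
edges drawn as arcs whose interiors are pairwise disjoint and avoid all vertex points. -/
def IsPlanar {V : Type*} (G : SimpleGraph V) : Prop :=
  ∃ (p : V → ℝ × ℝ) (γ : G.edgeSet → ℝ → ℝ × ℝ),
    Function.Injective p ∧
    (∀ e, ContinuousOn (γ e) (Set.Icc 0 1)) ∧
    (∀ e, Set.InjOn (γ e) (Set.Icc 0 1)) ∧
    (∀ e : G.edgeSet, ∀ u v : V, (e : Sym2 V) = s(u, v) →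
      ({γ e 0, γ e 1} : Set (ℝ × ℝ)) = {p u, p v}) ∧
    (∀ e : G.edgeSet, ∀ w : V, ∀ t ∈ Set.Ioo (0 : ℝ) 1, γ e t ≠ p w) ∧
    (∀ e₁ e₂ : G.edgeSet, e₁ ≠ e₂ → ∀ s ∈ Set.Ioo (0 : ℝ) 1, ∀ t ∈ Set.Ioo (0 : ℝ) 1,
      γ e₁ s ≠ γ e₂ t)

/-- A planar triangulation, i.e. an edge-maximal planar graph. -/
def IsPlanarTriangulation {W : Type*} (H : SimpleGraph W) : Prop :=
  IsPlanar H ∧ ∀ H' : SimpleGraph W, H < H' → ¬ IsPlanar H'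

/-- The Wagner graph `V₈`: the 8-cycle together with its four main diagonals. -/
def wagnerGraph : SimpleGraph (ZMod 8) :=
  SimpleGraph.fromRel (fun i j => j = i + 1 ∨ j = i + 4)


/-- If `v` has degree 1 and `G - v` has a nice `k`-coloring, then so does `G`. -/
theorem niceColoring_of_deleteVertex {V : Type*} [Fintype V] (G : SimpleGraph V)
    (k : ℕ) (hk : 11 ≤ k) (hΔ : maxDeg G ≤ k - 1) (v : V) (hv : deg G v = 1)
    (h : HasNiceColoring (G.induce ({v}ᶜ : Set V)) k) :
    HasNiceColoring G k := by
  classical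
  obtain ⟨cv, ce, h1, h2, h3⟩ := h
  set G' := G.induce ({v}ᶜ : Set V) with hG'
  -- the unique neighbor w of v
  obtain ⟨w, hw⟩ := Set.ncard_eq_one.mp hv
  have hadj : G.Adj v w := by
    rw [← SimpleGraph.mem_neighborSet, hw]; exact Set.mem_singleton _
  have hwv : w ≠ v := hadj.ne'
  have hmem : w ∈ ({v}ᶜ : Set V) := hwv
  set wv : ({v}ᶜ : Set V) := ⟨w, hmem⟩ with hwvdef
  have hadj_iff : ∀ x, G.Adj v x ↔ x = w := fun x => by
    rw [← SimpleGraph.mem_neighborSet, hw, Set.mem_singleton_iff]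
  -- degree computations
  have key : ∀ x : ({v}ᶜ : Set V), deg G' x = (G.neighborSet x.val \ {v}).ncard := by
    intro x
    unfold deg
    rw [← Set.ncard_image_of_injective _ Subtype.val_injective]
    congr 1
    ext y
    simp only [Set.mem_image, SimpleGraph.mem_neighborSet, Set.mem_diff,
      Set.mem_singleton_iff]
    constructor
    · rintro ⟨z, hz, rfl⟩
      exact ⟨hz, z.2⟩
    · rintro ⟨hy, hy'⟩
      exact ⟨⟨y, hy'⟩, hy, rfl⟩
  have degO : ∀ x : ({v}ᶜ : Set V), x.val ≠ w → deg G' x = deg G x.val := by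
    intro x hx
    rw [key]
    unfold deg
    congr 1
    rw [Set.diff_singleton_eq_self]
    intro hmem'
    exact hx ((hadj_iff x.val).mp (G.adj_symm hmem'))
  have degW : deg G' wv + 1 = deg G w := by
    rw [key]
    have hvmem : v ∈ G.neighborSet w := G.adj_symm hadj
    have := Set.ncard_diff_singleton_add_one hvmem (Set.toFinite _)
    exact this
  have degWle : deg G w ≤ k - 1 := le_trans (Finset.le_sup (Finset.mem_univ w)) hΔ
  -- fresh color lemma
  have fresh : ∀ S : Finset (Fin k), S.card < k → ∃ c, c ∉ S := by
    intro S hS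
    by_contra h'
    push_neg at h'
    have : S = Finset.univ := Finset.eq_univ_iff_forall.mpr h'
    rw [this, Finset.card_univ, Fintype.card_fin] at hS
    exact lt_irrefl _ hS
  -- finset of neighbors of wv in G'
  have hfin : (G'.neighborSet wv).Finite := Set.toFinite _
  set N : Finset ({v}ᶜ : Set V) := hfin.toFinset with hNdef
  have hNcard : N.card = deg G' wv := (Set.ncard_eq_toFinset_card _ hfin).symm
  have hNmem : ∀ x, x ∈ N ↔ G'.Adj wv x := by
    intro x; rw [hNdef, Set.Finite.mem_toFinset, SimpleGraph.mem_neighborSet]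
  -- choose b, the (possibly new) color of w
  have hb : ∃ b : Fin k, ∀ x : ({v}ᶜ : Set V), G'.Adj wv x →
      b ≠ ce s(wv, x) ∧ (6 ≤ deg G x.val → b ≠ cv x) := by
    by_cases h6 : 6 ≤ deg G' wv
    · refine ⟨cv wv, fun x hx => ⟨h3 _ _ hx h6, fun hdx => ?_⟩⟩
      have hxw : x.val ≠ w := fun hh => hx.ne (Subtype.ext hh.symm)
      exact h1 _ _ hx h6 (by rwa [degO x hxw])
    · push_neg at h6
      have hdle : deg G' wv ≤ 5 := Nat.lt_succ_iff.mp h6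
      set S : Finset (Fin k) :=
        N.image (fun x => ce s(wv, x)) ∪ N.image cv with hSdef
      have hScard : S.card < k := by
        calc S.card ≤ (N.image (fun x => ce s(wv, x))).card + (N.image cv).card :=
              Finset.card_union_le _ _
          _ ≤ N.card + N.card := Nat.add_le_add (Finset.card_image_le) (Finset.card_image_le)
          _ ≤ 5 + 5 := by rw [hNcard]; exact Nat.add_le_add hdle hdle
          _ < k := by omega
      obtain ⟨b, hbS⟩ := fresh S hScard
      refine ⟨b, fun x hx => ⟨?_, fun _ => ?_⟩⟩
      · intro hh
        exact hbS (Finset.mem_union_left _ (Finset.mem_image.mpr ⟨x, (hNmem x).mpr hx, hh.symm⟩))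
      · intro hh
        exact hbS (Finset.mem_union_right _ (Finset.mem_image.mpr ⟨x, (hNmem x).mpr hx, hh.symm⟩))
  obtain ⟨b, hb⟩ := hb
  -- choose a, the color of the new edge s(v, w)
  have ha : ∃ a : Fin k, a ≠ b ∧ ∀ x : ({v}ᶜ : Set V), G'.Adj wv x → a ≠ ce s(wv, x) := by
    set S : Finset (Fin k) := insert b (N.image (fun x => ce s(wv, x))) with hSdef
    have hScard : S.card < k := by
      calc S.card ≤ (N.image (fun x => ce s(wv, x))).card + 1 := Finset.card_insert_le _ _
        _ ≤ N.card + 1 := Nat.add_le_add_right Finset.card_image_le _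
        _ = deg G w := by rw [hNcard, degW]
        _ ≤ k - 1 := degWle
        _ < k := by omega
    obtain ⟨a, haS⟩ := fresh S hScard
    refine ⟨a, ?_, fun x hx hh => ?_⟩
    · intro hh; exact haS (by rw [hh]; exact Finset.mem_insert_self _ _)
    · exact haS (Finset.mem_insert_of_mem (Finset.mem_image.mpr ⟨x, (hNmem x).mpr hx, hh.symm⟩))
  obtain ⟨a, hab, ha⟩ := ha
  -- the embedding sending v to w (harmlessly)
  set f : V → ({v}ᶜ : Set V) := fun x => if hx : x = v then wv else ⟨x, hx⟩ with hfdef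
  have hf : ∀ x (hx : x ≠ v), f x = ⟨x, hx⟩ := by
    intro x hx; simp only [hfdef, dif_neg hx]
  -- the new coloring
  set cv' : V → Fin k := fun x => if x = w then b else cv (f x) with hcvdef
  set ce' : Sym2 V → Fin k := fun e => if v ∈ e then a else ce (Sym2.map f e) with hcedef
  have hce_eq : ∀ (x y : V) (hx : x ≠ v) (hy : y ≠ v),
      ce' s(x, y) = ce s(⟨x, hx⟩, ⟨y, hy⟩) := by
    intro x y hx hy
    have hnm : v ∉ s(x, y) := by
      rw [Sym2.mem_iff]; push_neg; exact ⟨fun hh => hx hh.symm, fun hh => hy hh.symm⟩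
    simp only [hcedef, if_neg hnm, Sym2.map_pair_eq, hf x hx, hf y hy]
  have hdegv : ¬ (6 ≤ deg G v) := by rw [hv]; omega
  -- adjacency transfers
  have hadjG' : ∀ (x y : V) (hx : x ≠ v) (hy : y ≠ v), G.Adj x y →
      G'.Adj (⟨x, hx⟩ : ({v}ᶜ : Set V)) ⟨y, hy⟩ := by
    intro x y hx hy hxy
    exact hxy
  refine ⟨cv', ce', ?_, ?_, ?_⟩
  · -- vertex coloring
    intro x y hxy hdx hdy
    have hx : x ≠ v := fun hh => hdegv (hh ▸ hdx)
    have hy : y ≠ v := fun hh => hdegv (hh ▸ hdy)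
    by_cases hxw : x = w
    · have hyw : y ≠ w := fun hh => hxy.ne (hxw.trans hh.symm)
      have hadj' : G'.Adj wv ⟨y, hy⟩ := hadjG' _ _ hwv hy (hxw ▸ hxy)
      have hres := (hb _ hadj').2 hdy
      simp only [hcvdef]
      rw [if_pos hxw, if_neg hyw, hf y hy]
      exact hres
    · by_cases hyw : y = w
      · have hadj' : G'.Adj wv ⟨x, hx⟩ := hadjG' _ _ hwv hx (hyw ▸ hxy.symm)
        have hres := (hb _ hadj').2 hdx
        simp only [hcvdef]
        rw [if_neg hxw, if_pos hyw, hf x hx]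
        exact fun hh => hres hh.symm
      · have hadj' := hadjG' _ _ hx hy hxy
        simp only [hcvdef]
        rw [if_neg hxw, if_neg hyw, hf x hx, hf y hy]
        exact h1 _ _ hadj' (by rwa [degO _ hxw]) (by rwa [degO _ hyw])
  · -- edge coloring
    intro u x y hux huy hxy
    by_cases huv : u = v
    · exact absurd (((hadj_iff x).mp (huv ▸ hux)).trans
        ((hadj_iff y).mp (huv ▸ huy)).symm) hxy
    · have hEv : ∀ z : V, z = v → ce' s(u, z) = a := by
        intro z hz
        simp only [hcedef]
        rw [if_pos (by rw [hz]; exact Sym2.mem_mk_right _ _)]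
      by_cases hxv : x = v
      · have huw : (⟨u, huv⟩ : ({v}ᶜ : Set V)) = wv :=
          Subtype.ext ((hadj_iff u).mp (hxv ▸ hux).symm)
        have hyv : y ≠ v := fun hh => hxy (hxv.trans hh.symm)
        rw [hEv x hxv, hce_eq u y huv hyv, huw]
        exact ha _ (huw ▸ hadjG' u y huv hyv huy)
      · by_cases hyv : y = v
        · have huw : (⟨u, huv⟩ : ({v}ᶜ : Set V)) = wv :=
            Subtype.ext ((hadj_iff u).mp (hyv ▸ huy).symm)
          rw [hEv y hyv, hce_eq u x huv hxv, huw]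
          exact fun hh => ha _ (huw ▸ hadjG' u x huv hxv hux) hh.symm
        · rw [hce_eq u x huv hxv, hce_eq u y huv hyv]
          exact h2 _ _ _ (hadjG' _ _ huv hxv hux) (hadjG' _ _ huv hyv huy)
            (fun hh => hxy (congrArg Subtype.val hh))
  · -- vertex-edge
    intro u x hux hdu
    have huv : u ≠ v := fun hh => hdegv (hh ▸ hdu)
    by_cases hxv : x = v
    · have huw : u = w := (hadj_iff u).mp (hxv ▸ hux).symm
      have hEv : ce' s(u, x) = a := by
        simp only [hcedef]
        rw [if_pos (by rw [hxv]; exact Sym2.mem_mk_right _ _)]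
      rw [hEv]
      simp only [hcvdef]
      rw [if_pos huw]
      exact fun hh => hab hh.symm
    · rw [hce_eq u x huv hxv]
      by_cases huw : u = w
      · have huw' : (⟨u, huv⟩ : ({v}ᶜ : Set V)) = wv := Subtype.ext huw
        simp only [hcvdef]
        rw [if_pos huw, huw']
        exact (hb _ (huw' ▸ hadjG' u x huv hxv hux)).1
      · simp only [hcvdef]
        rw [if_neg huw, hf u huv]
        exact h3 _ _ (hadjG' _ _ huv hxv hux) (by rwa [degO _ huw])
end

section
/- Let G be a graph with Δ(G) ≤ k − 1, k ≥ 11, having no nice k-coloring but such that every proper subgraph has one. Suppose u is a 2-vertex of G with neighbors x and y, and ψ is a nice k-coloring of G − uy with ψ(ux) = a. Then a is the unique color in {1,...,k} missing at y (not used on y or any edge at y). -/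
open SimpleGraph

/-!
Suppose a colour `c ≠ a` were missing at `y` in `G - uy`. If `y` has degree at least `7` in `G`, it
is still coloured in `G - uy`, and giving `uy` the colour `c` extends the colouring to `G`: the
`2`-vertex `u` is uncoloured and only sees `a` and `c`. So every missing colour at `y` is `a`, and one
exists because `y` has fewer than `k - 1` neighbours in `G - uy`. If `y` has degree at most `6`,
then `G` itself is nicely colourable: `y` has at most `5` other neighbours, so `k ≥ 11` leaves a
colour for `y` avoiding their colours and the edges at `y`, and then one for `uy` avoiding the
colours at `y` and at `u`.
-/

open Set Function

lemma exists_notMem_of_ncard_lt {k : ℕ} {S : Set (Fin k)} (h : S.ncard < k) : ∃ c, c ∉ S := by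
  by_contra! hS
  rw [eq_univ_of_forall hS, ncard_univ, Nat.card_eq_fintype_card, Fintype.card_fin] at h
  exact lt_irrefl k h

section

variable {V : Type*} {G : SimpleGraph V}

lemma deg_le_maxDeg [Fintype V] (v : V) : deg G v ≤ maxDeg G :=
  Finset.le_sup (Finset.mem_univ v)

lemma neighborSet_eq_pair_of_deg_eq_two [Finite V] {u x y : V} (hx : G.Adj u x) (hy : G.Adj u y)
    (hxy : x ≠ y) (h : deg G u = 2) : G.neighborSet u = {x, y} :=
  (eq_of_subset_of_ncard_le (pair_subset hx hy) (by rw [ncard_pair hxy]; exact h.le)).symm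

lemma exists_missingAt [Finite V] {k : ℕ} (cv : V → Fin k) (ce : Sym2 V → Fin k) (v : V)
    (h : deg G v + 1 < k) : ∃ c, MissingAt G cv ce v c := by
  obtain ⟨c, hc⟩ := exists_notMem_of_ncard_lt
    (S := insert (cv v) ((fun w => ce s(v, w)) '' G.neighborSet v)) <| by
    calc _ ≤ ((fun w => ce s(v, w)) '' G.neighborSet v).ncard + 1 := ncard_insert_le _ _
      _ ≤ deg G v + 1 := by gcongr; exact ncard_image_le (toFinite _)
      _ < k := h
  exact ⟨c, fun _ he => hc (he ▸ mem_insert _ _),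
    fun w hw he => hc (he ▸ mem_insert_of_mem _ ⟨w, hw, rfl⟩)⟩

variable {u y : V}

lemma deleteEdges_adj_of_ne {v w : V} (h : G.Adj v w) (hv : v ≠ u) (hw : w ≠ u) :
    (G.deleteEdges {s(u, y)}).Adj v w :=
  (deleteEdges_adj ..).2
    ⟨h, (ne_of_mem_of_not_mem' (Sym2.mem_mk_left u y) (by simp [hv.symm, hw.symm])).symm⟩

lemma neighborSet_deleteEdges_of_ne {v : V} (hu : v ≠ u) (hy : v ≠ y) :
    (G.deleteEdges {s(u, y)}).neighborSet v = G.neighborSet v := by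
  ext w
  simp only [mem_neighborSet, deleteEdges_adj, mem_singleton_iff]
  exact and_iff_left (ne_of_mem_of_not_mem' (Sym2.mem_mk_left v w) (by simp [hu, hy]))

lemma deg_deleteEdges_of_ne {v : V} (hu : v ≠ u) (hy : v ≠ y) :
    deg (G.deleteEdges {s(u, y)}) v = deg G v := by
  rw [deg, deg, neighborSet_deleteEdges_of_ne hu hy]

lemma neighborSet_deleteEdges_right :
    (G.deleteEdges {s(u, y)}).neighborSet y = G.neighborSet y \ {u} := by
  ext w
  simp only [mem_neighborSet, deleteEdges_adj, mem_singleton_iff, mem_sdiff]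
  rw [Sym2.eq_swap, Sym2.congr_left]

lemma deg_deleteEdges_right [Finite V] (h : G.Adj u y) :
    deg (G.deleteEdges {s(u, y)}) y = deg G y - 1 := by
  rw [deg, deg, neighborSet_deleteEdges_right,
    ncard_sdiff_singleton_of_mem ((G.mem_neighborSet y u).2 h.symm)]

lemma deg_deleteEdges_left [Finite V] (h : G.Adj u y) :
    deg (G.deleteEdges {s(u, y)}) u = deg G u - 1 := by
  rw [Sym2.eq_swap]
  exact deg_deleteEdges_right h.symm

lemma isNiceColoring_update_of_deleteEdges [DecidableEq V] {k : ℕ} {cv : V → Fin k}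
    {ce : Sym2 V → Fin k} (hψ : IsNiceColoring (G.deleteEdges {s(u, y)}) k cv ce)
    (hu : deg G u < 6) (b c : Fin k)
    (hc_u : ∀ w, (G.deleteEdges {s(u, y)}).Adj u w → ce s(u, w) ≠ c)
    (hc_y : ∀ w, (G.deleteEdges {s(u, y)}).Adj y w → ce s(y, w) ≠ c) (hbc : b ≠ c)
    (hb_edge : ∀ w, (G.deleteEdges {s(u, y)}).Adj y w → ce s(y, w) ≠ b)
    (hb_vertex : ∀ w, (G.deleteEdges {s(u, y)}).Adj y w →
      6 ≤ deg (G.deleteEdges {s(u, y)}) w → cv w ≠ b) :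
    IsNiceColoring G k (update cv y b) (update ce s(u, y) c) := by
  obtain ⟨hvv, hee, hve⟩ := hψ
  have ne_u : ∀ {v}, 6 ≤ deg G v → v ≠ u := by rintro v h rfl; omega
  have new_edge : ∀ v w w', G.Adj v w' → w ≠ w' → s(v, w) = s(u, y) →
      update ce s(u, y) c s(v, w) ≠ update ce s(u, y) c s(v, w') := by
    intro v w w' hw' hne he
    have he' : s(v, w') ≠ s(u, y) := fun he' => hne (Sym2.congr_right.1 (he.trans he'.symm))
    have hadj : (G.deleteEdges {s(u, y)}).Adj v w' := (deleteEdges_adj ..).2 ⟨hw', he'⟩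
    rw [he, update_self, update_of_ne he']
    rcases Sym2.eq_iff.1 he with ⟨rfl, -⟩ | ⟨rfl, -⟩
    exacts [(hc_u w' hadj).symm, (hc_y w' hadj).symm]
  refine ⟨fun v w hvw hv hw => ?_, fun v w w' hw hw' hne => ?_, fun v w hvw hv => ?_⟩
  · have hvu := ne_u hv
    have hwu := ne_u hw
    have hvw' := deleteEdges_adj_of_ne (y := y) hvw hvu hwu
    rcases eq_or_ne v y with rfl | hvy
    · rw [update_self, update_of_ne hvw.ne']
      exact (hb_vertex w hvw' (by rwa [deg_deleteEdges_of_ne hwu hvw.ne'])).symm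
    rcases eq_or_ne w y with rfl | hwy
    · rw [update_self, update_of_ne hvy]
      exact hb_vertex v hvw'.symm (by rwa [deg_deleteEdges_of_ne hvu hvy])
    rw [update_of_ne hvy, update_of_ne hwy]
    exact hvv v w hvw' (by rwa [deg_deleteEdges_of_ne hvu hvy])
      (by rwa [deg_deleteEdges_of_ne hwu hwy])
  · by_cases h : s(v, w) = s(u, y)
    · exact new_edge v w w' hw' hne h
    by_cases h' : s(v, w') = s(u, y)
    · exact (new_edge v w' w hw hne.symm h').symm
    rw [update_of_ne h, update_of_ne h']
    exact hee v w w' ((deleteEdges_adj ..).2 ⟨hw, h⟩) ((deleteEdges_adj ..).2 ⟨hw', h'⟩) hne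
  · have hvu := ne_u hv
    rcases eq_or_ne v y with rfl | hvy
    · rw [update_self]
      rcases eq_or_ne w u with rfl | hwu
      · rw [Sym2.eq_swap, update_self]
        exact hbc
      have hvw' := deleteEdges_adj_of_ne (y := v) hvw hvu hwu
      rw [update_of_ne ((deleteEdges_adj ..).1 hvw').2]
      exact (hb_edge w hvw').symm
    have he : s(v, w) ≠ s(u, y) :=
      ne_of_mem_of_not_mem' (Sym2.mem_mk_left v w) (by simp [hvu, hvy])
    rw [update_of_ne hvy, update_of_ne he]
    exact hve v w ((deleteEdges_adj ..).2 ⟨hvw, he⟩) (by rwa [deg_deleteEdges_of_ne hvu hvy])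


lemma hasNiceColoring_of_deleteEdges_of_deg_le [Finite V] {k : ℕ} (hk : 11 ≤ k)
    (hψ : HasNiceColoring (G.deleteEdges {s(u, y)}) k) (huy : G.Adj u y) (hu : deg G u ≤ 5)
    (hy : deg G y ≤ 6) : HasNiceColoring G k := by
  classical
  obtain ⟨cv, ce, hψ⟩ := hψ
  set H := G.deleteEdges {s(u, y)}
  have hNy : (H.neighborSet y).ncard ≤ 5 := by
    change deg H y ≤ 5
    rw [deg_deleteEdges_right huy]
    omega
  have hNu : (H.neighborSet u).ncard ≤ 4 := by
    change deg H u ≤ 4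
    rw [deg_deleteEdges_left huy]
    omega
  set Ey := (fun w => ce s(y, w)) '' H.neighborSet y
  set Eu := (fun w => ce s(u, w)) '' H.neighborSet u
  have hEy : Ey.ncard ≤ 5 := (ncard_image_le (toFinite _)).trans hNy
  have hEu : Eu.ncard ≤ 4 := (ncard_image_le (toFinite _)).trans hNu
  obtain ⟨b, hb⟩ := exists_notMem_of_ncard_lt (S := Ey ∪ cv '' H.neighborSet y) <| by
    have := ncard_union_le Ey (cv '' H.neighborSet y)
    have := ncard_image_le (f := cv) (toFinite (H.neighborSet y))
    omega
  obtain ⟨c, hc⟩ := exists_notMem_of_ncard_lt (S := insert b (Ey ∪ Eu)) <| by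
    have := ncard_insert_le b (Ey ∪ Eu)
    have := ncard_union_le Ey Eu
    omega
  exact ⟨_, _, isNiceColoring_update_of_deleteEdges hψ (by omega) b c
    (fun w hw he => hc (he ▸ mem_insert_of_mem _ (mem_union_right _ ⟨w, hw, rfl⟩)))
    (fun w hw he => hc (he ▸ mem_insert_of_mem _ (mem_union_left _ ⟨w, hw, rfl⟩)))
    (fun hbc => hc (hbc ▸ mem_insert b _))
    (fun w hw he => hb (he ▸ mem_union_left _ ⟨w, hw, rfl⟩))
    (fun w hw _ he => hb (he ▸ mem_union_right _ ⟨w, hw, rfl⟩))⟩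
end

theorem unique_missing_color_general {V : Type*} [Fintype V] (G : SimpleGraph V) (k : ℕ)
    (hk : 11 ≤ k) (hΔ : maxDeg G ≤ k - 1)
    (hG : ¬ HasNiceColoring G k)
    (u x y : V) (hux : G.Adj u x) (huy : G.Adj u y) (hxy : x ≠ y)
    (hu2 : deg G u = 2)
    (cv : V → Fin k) (ce : Sym2 V → Fin k)
    (hψ : IsNiceColoring (G.deleteEdges {s(u, y)}) k cv ce)
    (a : Fin k) (ha : ce s(u, x) = a) :
    ∀ c : Fin k, MissingAt (G.deleteEdges {s(u, y)}) cv ce y c ↔ c = a := by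
  classical
  by_cases hy : deg G y ≤ 6
  · exact (hG (hasNiceColoring_of_deleteEdges_of_deg_le hk ⟨cv, ce, hψ⟩ huy (by omega)
      (by omega))).elim
  set H := G.deleteEdges {s(u, y)}
  have h6 : 6 ≤ deg H y := by rw [deg_deleteEdges_right huy]; omega
  have hc_u : ∀ c ≠ a, ∀ w, H.Adj u w → ce s(u, w) ≠ c := by
    rintro c hca w hw rfl
    obtain ⟨hw, hwy⟩ := (deleteEdges_adj ..).1 hw
    have hw : w ∈ ({x, y} : Set V) := neighborSet_eq_pair_of_deg_eq_two hux huy hxy hu2 ▸ hw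
    rcases hw with rfl | rfl
    exacts [hca ha, hwy rfl]
  have hmissing : ∀ c, MissingAt H cv ce y c → c = a := fun c hc => by_contra fun hca =>
    hG ⟨_, _, isNiceColoring_update_of_deleteEdges hψ (by omega) (cv y) c (hc_u c hca) hc.2
      (hc.1 h6) (fun w hw => (hψ.2.2 y w hw h6).symm)
      (fun w hw hw6 => (hψ.1 y w hw h6 hw6).symm)⟩
  obtain ⟨c₀, hc₀⟩ := exists_missingAt cv ce y (G := H) <| by
    rw [deg_deleteEdges_right huy]
    have := deg_le_maxDeg (G := G) y
    omega
  exact fun c => ⟨hmissing c, by rintro rfl; rwa [← hmissing c₀ hc₀]⟩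

/-- Claim 1(i): if `G` is a minimal graph with no nice `k`-coloring, `u` is a `2`-vertex
with neighbors `x` and `y`, and `ψ = (cv, ce)` is a nice `k`-coloring of `G - uy` with
`ce(ux) = a`, then `a` is the unique color missing at `y`. -/
theorem unique_missing_color {V : Type*} [Fintype V] (G : SimpleGraph V) (k : ℕ)
    (hk : 11 ≤ k) (hΔ : maxDeg G ≤ k - 1)
    (hG : ¬ HasNiceColoring G k)
    (hmin : ∀ H : SimpleGraph V, H < G → HasNiceColoring H k)
    (u x y : V) (hux : G.Adj u x) (huy : G.Adj u y) (hxy : x ≠ y)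
    (hu2 : deg G u = 2)
    (cv : V → Fin k) (ce : Sym2 V → Fin k)
    (hψ : IsNiceColoring (G.deleteEdges {s(u, y)}) k cv ce)
    (a : Fin k) (ha : ce s(u, x) = a) :
    ∀ c : Fin k, MissingAt (G.deleteEdges {s(u, y)}) cv ce y c ↔ c = a :=
  unique_missing_color_general G k hk hΔ hG u x y hux huy hxy hu2 cv ce hψ a ha
end

section
/- Let G be a minimal graph with Δ(G) ≤ k − 1, k ≥ 11, having no nice k-coloring. Suppose G contains two 3-vertices u, v with the same three neighbors x, y, z. For any nice k-coloring ψ of G − {u,v} and any choice of two-element sets C_x, C_y, C_z of colors missing at x, y, z respectively, we have C_x ∩ C_y ∩ C_z ≠ ∅. -/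
/-!
If no color were common to the three lists, `ψ` would extend to a nice coloring of `G`. A vertex
among `x, y, z` that is colored in `G` but not in `G - {u, v}` has fewer than `6` edges there, so
at most `10 < k` colors are forbidden for it. The edges from `u` and from `v` to `x, y, z` are then
colored by two systems of distinct representatives of lists of missing colors that differ at every
vertex. At a newly colored vertex at least `k - 6 ≥ 5` colors are missing, which leaves enough
room; otherwise the lists are the given two-element sets, and their empty common intersection is
exactly what makes the two systems exist.
-/

open SimpleGraph

open Finset

section Transversal

variable {ι α : Type*}

def IsDisjointSDRPair (S : Finset ι) (L : ι → Finset α) (f g : ι → α) : Prop :=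
  (∀ i ∈ S, f i ∈ L i ∧ g i ∈ L i ∧ f i ≠ g i) ∧
    ∀ i ∈ S, ∀ j ∈ S, i ≠ j → f i ≠ f j ∧ g i ≠ g j

theorem IsDisjointSDRPair.mono {S : Finset ι} {L L' : ι → Finset α} {f g : ι → α}
    (h : IsDisjointSDRPair S L f g) (hL : ∀ i ∈ S, L i ⊆ L' i) :
    IsDisjointSDRPair S L' f g :=
  ⟨fun i hi => ⟨hL i hi (h.1 i hi).1, hL i hi (h.1 i hi).2.1, (h.1 i hi).2.2⟩, h.2⟩

theorem isDisjointSDRPair_of_rows [DecidableEq ι] {i j l : ι} (hij : i ≠ j) (hil : i ≠ l)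
    (hjl : j ≠ l) {L : ι → Finset α} {a a' b b' c c' : α} (ha : a ∈ L i) (ha' : a' ∈ L i)
    (hb : b ∈ L j) (hb' : b' ∈ L j) (hc : c ∈ L l) (hc' : c' ∈ L l)
    (haa : a ≠ a') (hbb : b ≠ b') (hcc : c ≠ c')
    (hrow : a ≠ b ∧ a ≠ c ∧ b ≠ c) (hrow' : a' ≠ b' ∧ a' ≠ c' ∧ b' ≠ c') :
    ∃ f g, IsDisjointSDRPair {i, j, l} L f g := by
  refine ⟨fun t => if t = i then a else if t = j then b else c,
    fun t => if t = i then a' else if t = j then b' else c', ?_, ?_⟩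
  · simp_all [hij.symm, hil.symm, hjl.symm]
  · simp only [mem_insert, mem_singleton]
    rintro t (rfl | rfl | rfl) t' (rfl | rfl | rfl) htt' <;>
      simp_all [hij.symm, hil.symm, hjl.symm, Ne.symm]

/-- Each color lies in at most two of the lists, so the constraints "the two colors taken from a
list go one to `f`, one to `g`" and "a color taken from two lists goes to `f` in one of them and
to `g` in the other" form a bipartite graph on the six chosen colors. -/
theorem exists_isDisjointSDRPair_of_forall_notMem {S : Finset ι} (hS : #S = 3)
    {L : ι → Finset α} (hL : ∀ i ∈ S, 2 ≤ #(L i)) (hcommon : ∀ c, ∃ i ∈ S, c ∉ L i) :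
    ∃ f g, IsDisjointSDRPair S L f g := by
  classical
  obtain ⟨i, j, l, hij, hil, hjl, rfl⟩ := card_eq_three.mp hS
  obtain ⟨a, ha, a', ha', haa⟩ := one_lt_card.mp (hL i (by simp))
  obtain ⟨b, hb, b', hb', hbb⟩ := one_lt_card.mp (hL j (by simp))
  obtain ⟨c, hc, c', hc', hcc⟩ := one_lt_card.mp (hL l (by simp))
  have hno : ∀ m ∈ L i, m ∈ L j → m ∉ L l := by
    intro m hmi hmj hml
    obtain ⟨t, ht, hmt⟩ := hcommon m
    simp only [mem_insert, mem_singleton] at ht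
    rcases ht with rfl | rfl | rfl <;> contradiction
  have key : (a ≠ b ∧ a ≠ c ∧ b ≠ c) ∧ (a' ≠ b' ∧ a' ≠ c' ∧ b' ≠ c') ∨
      (a ≠ b' ∧ a ≠ c ∧ b' ≠ c) ∧ (a' ≠ b ∧ a' ≠ c' ∧ b ≠ c') ∨
      (a ≠ b ∧ a ≠ c' ∧ b ≠ c') ∧ (a' ≠ b' ∧ a' ≠ c ∧ b' ≠ c) ∨
      (a ≠ b' ∧ a ≠ c' ∧ b' ≠ c') ∧ (a' ≠ b ∧ a' ≠ c ∧ b ≠ c) := by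
    grind
  rcases key with ⟨h, h'⟩ | ⟨h, h'⟩ | ⟨h, h'⟩ | ⟨h, h'⟩
  · exact isDisjointSDRPair_of_rows hij hil hjl ha ha' hb hb' hc hc' haa hbb hcc h h'
  · exact isDisjointSDRPair_of_rows hij hil hjl ha ha' hb' hb hc hc' haa hbb.symm hcc h h'
  · exact isDisjointSDRPair_of_rows hij hil hjl ha ha' hb hb' hc' hc haa hbb hcc.symm h h'
  · exact isDisjointSDRPair_of_rows hij hil hjl ha ha' hb' hb hc' hc haa hbb.symm hcc.symm h h'

/-- A list with at least four colors can be cut down so as to avoid the (at most two) colors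
shared by two-element sublists of the other two lists. -/
theorem exists_isDisjointSDRPair {S : Finset ι} (hS : #S = 3) {C L : ι → Finset α}
    (hC : ∀ i ∈ S, #(C i) = 2) (hcommon : ∀ c, ∃ i ∈ S, c ∉ C i)
    (hL : ∀ i ∈ S, C i ⊆ L i ∨ 4 ≤ #(L i)) :
    ∃ f g, IsDisjointSDRPair S L f g := by
  classical
  by_cases hsub : ∀ i ∈ S, C i ⊆ L i
  · obtain ⟨f, g, h⟩ :=
      exists_isDisjointSDRPair_of_forall_notMem hS (fun i hi => (hC i hi).ge) hcommon
    exact ⟨f, g, h.mono hsub⟩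
  push Not at hsub
  obtain ⟨i, hi, hCi⟩ := hsub
  have hLi : 4 ≤ #(L i) := (hL i hi).resolve_left hCi
  have hpair : ∀ j ∈ S, ∃ B ⊆ L j, #B = 2 := fun j hj =>
    (hL j hj).elim (fun h => ⟨C j, h, hC j hj⟩) (fun h => exists_subset_card_eq (by omega))
  choose! B hBL hB using hpair
  obtain ⟨j, l, -, hjl⟩ := card_eq_two.mp (by rw [card_erase_of_mem hi, hS] : #(S.erase i) = 2)
  have hj : j ≠ i ∧ j ∈ S := mem_erase.mp (by simp [hjl])
  have hl : l ≠ i ∧ l ∈ S := mem_erase.mp (by simp [hjl])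
  set B' := Function.update B i (L i \ (B j ∩ B l))
  have hB'i : 2 ≤ #(B' i) := by
    have h₁ := le_card_sdiff (B j ∩ B l) (L i)
    have h₂ := card_le_card (inter_subset_left : B j ∩ B l ⊆ B j)
    simp only [B', Function.update_self]
    rw [hB j hj.2] at h₂
    omega
  have hB' : ∀ t ∈ S, 2 ≤ #(B' t) := by
    intro t ht
    by_cases hti : t = i
    · exact hti ▸ hB'i
    · simp only [B', Function.update_of_ne hti, hB t ht, le_refl]
  have hB'common : ∀ c, ∃ t ∈ S, c ∉ B' t := by
    intro c
    by_cases hc : c ∈ B' i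
    · simp only [B', Function.update_self, mem_sdiff, mem_inter, not_and_or] at hc
      rcases hc.2 with hc | hc
      · exact ⟨j, hj.2, by simpa [B', Function.update_of_ne hj.1] using hc⟩
      · exact ⟨l, hl.2, by simpa [B', Function.update_of_ne hl.1] using hc⟩
    · exact ⟨i, hi, hc⟩
  obtain ⟨f, g, h⟩ := exists_isDisjointSDRPair_of_forall_notMem hS hB' hB'common
  refine ⟨f, g, h.mono fun t ht => ?_⟩
  by_cases hti : t = i
  · subst hti; simp [B']
  · simp only [B', Function.update_of_ne hti]; exact hBL t ht

theorem exists_isDisjointSDRPair_three [DecidableEq ι] [DecidableEq α] {x y z : ι}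
    (hS : #({x, y, z} : Finset ι) = 3) {Cx Cy Cz : Finset α} (hCx : #Cx = 2) (hCy : #Cy = 2)
    (hCz : #Cz = 2) (hcommon : Cx ∩ Cy ∩ Cz = ∅) {L : ι → Finset α} (hLx : Cx ⊆ L x ∨ 4 ≤ #(L x))
    (hLy : Cy ⊆ L y ∨ 4 ≤ #(L y)) (hLz : Cz ⊆ L z ∨ 4 ≤ #(L z)) :
    ∃ f g, IsDisjointSDRPair {x, y, z} L f g := by
  obtain ⟨hxy, hxz, hyz⟩ : x ≠ y ∧ x ≠ z ∧ y ≠ z := by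
    refine ⟨?_, ?_, ?_⟩ <;> rintro rfl <;> simp at hS <;>
      exact absurd hS (card_le_two.trans_lt (by norm_num)).ne
  let C : ι → Finset α := fun w => if w = x then Cx else if w = y then Cy else Cz
  refine exists_isDisjointSDRPair hS (C := C) ?_ ?_ ?_
  · intro w _; simp only [C]; split_ifs <;> assumption
  · intro c
    have hc : c ∉ Cx ∩ Cy ∩ Cz := by simp [hcommon]
    simp only [mem_inter, not_and_or] at hc
    rcases hc with (hc | hc) | hc
    · exact ⟨x, by simp, by simpa [C] using hc⟩
    · exact ⟨y, by simp, by simpa [C, hxy.symm] using hc⟩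
    · exact ⟨z, by simp, by simpa [C, hxz.symm, hyz.symm] using hc⟩
  · simp only [mem_insert, mem_singleton]
    rintro w (rfl | rfl | rfl)
    · simpa [C] using hLx
    · simpa [C, hxy.symm] using hLy
    · simpa [C, hxz.symm, hyz.symm] using hLz

end Transversal

section Coloring

variable {V : Type*} {k : ℕ}

/-- Only the vertices satisfying `P` carry a color; `IsNiceColoring H k` is the case
`P = (6 ≤ deg H ·)`. -/
def IsColoringOn (H : SimpleGraph V) (P : V → Prop) (cv : V → Fin k) (ce : Sym2 V → Fin k) :
    Prop :=
  (∀ a b, H.Adj a b → P a → P b → cv a ≠ cv b) ∧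
    (∀ a b c, H.Adj a b → H.Adj a c → b ≠ c → ce s(a, b) ≠ ce s(a, c)) ∧
    ∀ a b, H.Adj a b → P a → cv a ≠ ce s(a, b)

def MissingOn (H : SimpleGraph V) (P : V → Prop) (cv : V → Fin k) (ce : Sym2 V → Fin k) (w : V)
    (c : Fin k) : Prop :=
  (P w → cv w ≠ c) ∧ ∀ b, H.Adj w b → ce s(w, b) ≠ c

variable {H G : SimpleGraph V} {P Q : V → Prop} {cv cv' : V → Fin k} {ce : Sym2 V → Fin k}

theorem IsColoringOn.mono (h : IsColoringOn H Q cv ce) (hPQ : ∀ t, P t → Q t) :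
    IsColoringOn H P cv ce :=
  ⟨fun a b hab ha hb => h.1 a b hab (hPQ a ha) (hPQ b hb), h.2.1,
    fun a b hab ha => h.2.2 a b hab (hPQ a ha)⟩

theorem MissingOn.of_colored {w : V} {c : Fin k} (h : MissingOn H P cv ce w c) (hw : P w)
    (hcv : cv' w = cv w) : MissingOn H Q cv' ce w c :=
  ⟨fun _ => hcv ▸ h.1 hw, h.2⟩

theorem MissingAt.toMissingOn {w : V} {c : Fin k} (h : MissingAt H cv ce w c) :
    MissingOn H (6 ≤ deg H ·) cv ce w c :=
  h

theorem le_card_missingOn [Finite V] (H : SimpleGraph V) (P : V → Prop) (cv : V → Fin k)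
    (ce : Sym2 V → Fin k) (w : V) [DecidablePred (MissingOn H P cv ce w)] :
    k ≤ #{c | MissingOn H P cv ce w c} + deg H w + 1 := by
  set N := (Set.toFinite (H.neighborSet w)).toFinset
  have hused : #{c | ¬ MissingOn H P cv ce w c} ≤ deg H w + 1 :=
    calc #{c | ¬ MissingOn H P cv ce w c}
        ≤ #(insert (cv w) (N.image fun b => ce s(w, b))) := by
          refine card_le_card fun c hc => ?_
          replace hc : ¬ MissingOn H P cv ce w c := (mem_filter.mp hc).2
          simp only [MissingOn, not_and_or, not_forall, not_not] at hc
          rcases hc with ⟨-, hc⟩ | ⟨b, hb, hc⟩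
          · exact mem_insert.mpr (Or.inl hc.symm)
          · exact mem_insert_of_mem (mem_image.mpr ⟨b, by simpa [N] using hb, hc⟩)
      _ ≤ #(N.image fun b => ce s(w, b)) + 1 := card_insert_le _ _
      _ ≤ #N + 1 := by gcongr; exact card_image_le
      _ = deg H w + 1 := by rw [deg, Set.ncard_eq_toFinset_card]
  have hsplit :=
    card_filter_add_card_filter_not (s := univ) (p := fun c => MissingOn H P cv ce w c)
  simp only [card_univ, Fintype.card_fin] at hsplit
  omega

theorem subset_missingOn_or_four_le_card [Finite V] (hk : 11 ≤ k)
    (hcv : ∀ t, 6 ≤ deg H t → cv' t = cv t) {w : V} {D : Finset (Fin k)}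
    (hD : ∀ c ∈ D, MissingAt H cv ce w c) [DecidablePred (MissingOn H Q cv' ce w)] :
    D ⊆ ({c | MissingOn H Q cv' ce w c} : Finset (Fin k)) ∨
      4 ≤ #{c | MissingOn H Q cv' ce w c} := by
  by_cases hw : 6 ≤ deg H w
  · exact Or.inl fun c hc =>
      mem_filter.mpr ⟨mem_univ c, (hD c hc).toMissingOn.of_colored hw (hcv w hw)⟩
  · have := le_card_missingOn H Q cv' ce w
    omega

theorem IsColoringOn.exists_update [Finite V] [DecidableEq V] (h : IsColoringOn H P cv ce)
    (w : V) (hw : 2 * deg H w < k) :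
    ∃ c, IsColoringOn H (fun t => P t ∨ t = w) (Function.update cv w c) ce := by
  set N := (Set.toFinite (H.neighborSet w)).toFinset
  have hN : ∀ b, b ∈ N ↔ H.Adj w b := by simp [N]
  obtain ⟨c, -, hc⟩ :
      ∃ c ∈ (univ : Finset (Fin k)), c ∉ N.image cv ∪ N.image fun b => ce s(w, b) := by
    refine exists_mem_notMem_of_card_lt_card ?_
    calc #(N.image cv ∪ N.image fun b => ce s(w, b))
        ≤ #N + #N := (card_union_le _ _).trans (add_le_add card_image_le card_image_le)
      _ < #(univ : Finset (Fin k)) := by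
          rw [card_univ, Fintype.card_fin, ← Set.ncard_eq_toFinset_card]; unfold deg at hw; omega
  simp only [mem_union, mem_image, hN, not_or, not_exists, not_and] at hc
  refine ⟨c, ?_, h.2.1, ?_⟩
  · intro a b hab ha hb
    by_cases haw : a = w <;> by_cases hbw : b = w
    · exact absurd (haw ▸ hbw ▸ hab) H.irrefl
    · subst haw; simpa [hbw] using Ne.symm (hc.1 b hab)
    · subst hbw; simpa [haw] using hc.1 a hab.symm
    · simpa [haw, hbw] using h.1 a b hab (ha.resolve_right haw) (hb.resolve_right hbw)
  · intro a b hab ha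
    by_cases haw : a = w
    · subst haw; simpa using Ne.symm (hc.2 b hab)
    · simpa [haw] using h.2.2 a b hab (ha.resolve_right haw)

theorem IsColoringOn.exists_extend [Finite V] (h : IsColoringOn H P cv ce) (s : Finset V)
    (hs : ∀ w ∈ s, ¬ P w → 2 * deg H w < k) :
    ∃ cv', (∀ t, P t → cv' t = cv t) ∧ IsColoringOn H (fun t => P t ∨ t ∈ s) cv' ce := by
  classical
  induction s using Finset.induction_on with
  | empty => exact ⟨cv, fun _ _ => rfl, h.mono fun t ht => ht.resolve_right (notMem_empty t)⟩
  | insert w s _ ih =>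
    obtain ⟨cv₁, hcv₁, h₁⟩ := ih fun t ht => hs t (mem_insert_of_mem ht)
    by_cases hw : P w
    · refine ⟨cv₁, hcv₁, h₁.mono fun t ht => ?_⟩
      rcases ht with ht | ht
      · exact Or.inl ht
      · rcases mem_insert.mp ht with rfl | ht
        exacts [Or.inl hw, Or.inr ht]
    · obtain ⟨c, hc⟩ := h₁.exists_update w (hs w (mem_insert_self w s) hw)
      refine ⟨Function.update cv₁ w c, fun t ht => ?_, hc.mono fun t ht => ?_⟩
      · rw [Function.update_of_ne (by rintro rfl; exact hw ht)]
        exact hcv₁ t ht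
      · rw [mem_insert] at ht
        tauto

def recolorStar {β : Type*} [DecidableEq V] (ce : Sym2 V → β) (u : V) (c : V → β) :
    Sym2 V → β :=
  Sym2.lift ⟨fun a b => if a = u then c b else if b = u then c a else ce s(a, b), fun a b => by
    by_cases ha : a = u <;> by_cases hb : b = u <;> simp [ha, hb, Sym2.eq_swap]⟩

section recolorStar

variable {β : Type*} [DecidableEq V] {ce : Sym2 V → β} {u : V} {c : V → β}

@[simp] theorem recolorStar_mk_left (b : V) : recolorStar ce u c s(u, b) = c b := by
  simp [recolorStar]

@[simp] theorem recolorStar_mk_right (a : V) : recolorStar ce u c s(a, u) = c a := by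
  by_cases ha : a = u <;> simp [recolorStar, ha]

theorem recolorStar_mk_of_ne {a b : V} (ha : a ≠ u) (hb : b ≠ u) :
    recolorStar ce u c s(a, b) = ce s(a, b) := by
  simp [recolorStar, ha, hb]

end recolorStar

theorem IsColoringOn.recolorStar [DecidableEq V] {u : V} {c : V → Fin k}
    (h : IsColoringOn (G.deleteIncidenceSet u) P cv ce) (hu : ¬ P u)
    (hc : ∀ a b, G.Adj u a → G.Adj u b → a ≠ b → c a ≠ c b)
    (hmiss : ∀ a, G.Adj u a → MissingOn (G.deleteIncidenceSet u) P cv ce a (c a)) :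
    IsColoringOn G P cv (_root_.recolorStar ce u c) := by
  have hne : ∀ a, P a → a ≠ u := fun a ha hau => hu (hau ▸ ha)
  refine ⟨fun a b hab ha hb =>
    h.1 a b (deleteIncidenceSet_adj.mpr ⟨hab, hne a ha, hne b hb⟩) ha hb, ?_, ?_⟩
  · intro a b d hab had hbd
    by_cases hau : a = u
    · subst hau; simpa using hc b d hab had hbd
    by_cases hbu : b = u
    · subst hbu
      have hdu : d ≠ b := Ne.symm hbd
      rw [recolorStar_mk_right, recolorStar_mk_of_ne hau hdu]
      exact Ne.symm ((hmiss a hab.symm).2 d (deleteIncidenceSet_adj.mpr ⟨had, hau, hdu⟩))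
    by_cases hdu : d = u
    · subst hdu
      rw [recolorStar_mk_right, recolorStar_mk_of_ne hau hbu]
      exact (hmiss a had.symm).2 b (deleteIncidenceSet_adj.mpr ⟨hab, hau, hbu⟩)
    rw [recolorStar_mk_of_ne hau hbu, recolorStar_mk_of_ne hau hdu]
    exact h.2.1 a b d (deleteIncidenceSet_adj.mpr ⟨hab, hau, hbu⟩)
      (deleteIncidenceSet_adj.mpr ⟨had, hau, hdu⟩) hbd
  · intro a b hab ha
    have hau := hne a ha
    by_cases hbu : b = u
    · subst hbu
      rw [recolorStar_mk_right]
      exact (hmiss a hab.symm).1 ha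
    · rw [recolorStar_mk_of_ne hau hbu]
      exact h.2.2 a b (deleteIncidenceSet_adj.mpr ⟨hab, hau, hbu⟩) ha

theorem MissingOn.recolorStar [DecidableEq V] {u w : V} {c : V → Fin k} {d : Fin k}
    (h : MissingOn (G.deleteIncidenceSet u) P cv ce w d) (hw : w ≠ u)
    (hd : G.Adj w u → c w ≠ d) : MissingOn G P cv (_root_.recolorStar ce u c) w d := by
  refine ⟨h.1, fun b hb => ?_⟩
  by_cases hbu : b = u
  · subst hbu
    rw [recolorStar_mk_right]
    exact hd hb
  · rw [recolorStar_mk_of_ne hw hbu]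
    exact h.2 b (deleteIncidenceSet_adj.mpr ⟨hb, hw, hbu⟩)

theorem deleteEdges_incidenceSet_union (G : SimpleGraph V) (u v : V) :
    G.deleteEdges (G.incidenceSet u ∪ G.incidenceSet v) =
      (G.deleteIncidenceSet v).deleteIncidenceSet u := by
  ext a b
  simp only [deleteEdges_adj, Set.mem_union, mk'_mem_incidenceSet_iff, deleteIncidenceSet_adj]
  tauto

theorem deg_deleteEdges_le [Finite V] (G : SimpleGraph V) (s : Set (Sym2 V)) (t : V) :
    deg (G.deleteEdges s) t ≤ deg G t :=
  Set.ncard_le_ncard fun _ hb => G.deleteEdges_le s hb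

theorem neighborSet_deleteEdges_incidenceSet_union {t u v : V} (htu : t ≠ u) (htv : t ≠ v)
    (hu : ¬ G.Adj t u) (hv : ¬ G.Adj t v) :
    (G.deleteEdges (G.incidenceSet u ∪ G.incidenceSet v)).neighborSet t = G.neighborSet t := by
  rw [deleteEdges_incidenceSet_union]
  ext b
  simp only [mem_neighborSet, deleteIncidenceSet_adj]
  refine ⟨fun hb => hb.1.1, fun hb => ⟨⟨hb, htv, ?_⟩, htu, ?_⟩⟩ <;> rintro rfl <;> contradiction

theorem six_le_deg_deleteEdges_or_mem {u v t : V} {S : Finset V}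
    (hSu : ∀ a, G.Adj u a ↔ a ∈ S) (hSv : ∀ a, G.Adj v a ↔ a ∈ S) (hu : deg G u < 6)
    (hv : deg G v < 6) (ht : 6 ≤ deg G t) :
    6 ≤ deg (G.deleteEdges (G.incidenceSet u ∪ G.incidenceSet v)) t ∨ t ∈ S := by
  refine or_iff_not_imp_right.mpr fun htS => ?_
  have htu : t ≠ u := by rintro rfl; omega
  have htv : t ≠ v := by rintro rfl; omega
  rwa [deg, neighborSet_deleteEdges_incidenceSet_union htu htv
    (fun h => htS ((hSu t).mp h.symm)) (fun h => htS ((hSv t).mp h.symm))]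

theorem IsColoringOn.exists_extend_twins [DecidableEq V] {u v : V}
    (h : IsColoringOn (G.deleteEdges (G.incidenceSet u ∪ G.incidenceSet v)) P cv ce)
    (hu : ¬ P u) (hv : ¬ P v) {S : Finset V} (hSu : ∀ a, G.Adj u a ↔ a ∈ S)
    (hSv : ∀ a, G.Adj v a ↔ a ∈ S) {L : V → Finset (Fin k)}
    (hL : ∀ a ∈ S, ∀ c ∈ L a,
      MissingOn (G.deleteEdges (G.incidenceSet u ∪ G.incidenceSet v)) P cv ce a c)
    {f g : V → Fin k} (hfg : IsDisjointSDRPair S L f g) :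
    ∃ ce', IsColoringOn G P cv ce' := by
  rw [deleteEdges_incidenceSet_union] at h hL
  have huS : u ∉ S := fun h => G.irrefl ((hSu u).mpr h)
  have hSu₁ : ∀ a, (G.deleteIncidenceSet v).Adj u a → a ∈ S :=
    fun a ha => (hSu a).mp (G.deleteIncidenceSet_le v ha)
  have h₁ := h.recolorStar hu (fun a b ha hb hab => (hfg.2 a (hSu₁ a ha) b (hSu₁ b hb) hab).1)
    fun a ha => hL a (hSu₁ a ha) (f a) (hfg.1 a (hSu₁ a ha)).1
  refine ⟨_, h₁.recolorStar hv
    (fun a b ha hb hab => (hfg.2 a ((hSv a).mp ha) b ((hSv b).mp hb) hab).2) fun a ha => ?_⟩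
  have haS := (hSv a).mp ha
  exact (hL a haS (g a) (hfg.1 a haS).2.1).recolorStar (fun hau => huS (hau ▸ haS))
    fun _ => (hfg.1 a haS).2.2

end Coloring

theorem missing_colors_intersect_general {V : Type*} [Fintype V] (G : SimpleGraph V) (k : ℕ)
    (hk : 11 ≤ k)
    (hG : ¬ HasNiceColoring G k)
    (u v x y z : V)
    (hu3 : deg G u = 3) (hv3 : deg G v = 3)
    (hNu : G.neighborSet u = {x, y, z}) (hNv : G.neighborSet v = {x, y, z})
    (cv : V → Fin k) (ce : Sym2 V → Fin k)
    (hψ : IsNiceColoring (G.deleteEdges (G.incidenceSet u ∪ G.incidenceSet v)) k cv ce)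
    (Cx Cy Cz : Finset (Fin k))
    (hCx : Cx.card = 2) (hCy : Cy.card = 2) (hCz : Cz.card = 2)
    (hmx : ∀ c ∈ Cx,
      MissingAt (G.deleteEdges (G.incidenceSet u ∪ G.incidenceSet v)) cv ce x c)
    (hmy : ∀ c ∈ Cy,
      MissingAt (G.deleteEdges (G.incidenceSet u ∪ G.incidenceSet v)) cv ce y c)
    (hmz : ∀ c ∈ Cz,
      MissingAt (G.deleteEdges (G.incidenceSet u ∪ G.incidenceSet v)) cv ce z c) :
    (Cx ∩ Cy ∩ Cz).Nonempty := by
  classical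
  by_contra hempty
  set G' := G.deleteEdges (G.incidenceSet u ∪ G.incidenceSet v)
  set S : Finset V := {x, y, z}
  have hSu : ∀ a, G.Adj u a ↔ a ∈ S := fun a => by rw [← mem_neighborSet, hNu]; simp [S]
  have hSv : ∀ a, G.Adj v a ↔ a ∈ S := fun a => by rw [← mem_neighborSet, hNv]; simp [S]
  have hS : #S = 3 := by rw [← hu3, deg, hNu, ← Set.ncard_coe_finset]; simp [S]
  obtain ⟨cv₁, hcv₁, hψ₁⟩ := IsColoringOn.exists_extend hψ S fun w _ hw => by omega
  set Q : V → Prop := fun t => 6 ≤ deg G' t ∨ t ∈ S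
  have hlow : ∀ t, deg G t = 3 → (∀ a, G.Adj t a ↔ a ∈ S) → ¬ Q t := by
    rintro t ht hSt (hQ | hQ)
    · have : deg G' t ≤ deg G t := deg_deleteEdges_le G _ t
      omega
    · exact G.irrefl ((hSt t).mpr hQ)
  obtain ⟨f, g, hfg⟩ := exists_isDisjointSDRPair_three hS hCx hCy hCz
    (not_nonempty_iff_eq_empty.mp hempty) (L := fun w => {c | MissingOn G' Q cv₁ ce w c})
    (subset_missingOn_or_four_le_card hk hcv₁ hmx) (subset_missingOn_or_four_le_card hk hcv₁ hmy)
    (subset_missingOn_or_four_le_card hk hcv₁ hmz)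
  obtain ⟨ce', hce'⟩ := hψ₁.exists_extend_twins (hlow u hu3 hSu) (hlow v hv3 hSv) hSu hSv
    (fun w _ c hc => (mem_filter.mp hc).2) hfg
  exact hG ⟨cv₁, ce', hce'.mono fun _ => six_le_deg_deleteEdges_or_mem hSu hSv (by omega) (by omega)⟩

/-- Claim 2(i): if `G` is a minimal graph with no nice `k`-coloring containing two
`3`-vertices `u`, `v` with the same neighbors `x`, `y`, `z`, then for any nice
`k`-coloring of `G - {u, v}` and any two-element sets `Cx`, `Cy`, `Cz` of colors missing
at `x`, `y`, `z`, we have `Cx ∩ Cy ∩ Cz ≠ ∅`. -/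
theorem missing_colors_intersect {V : Type*} [Fintype V] (G : SimpleGraph V) (k : ℕ)
    (hk : 11 ≤ k) (hΔ : maxDeg G ≤ k - 1)
    (hG : ¬ HasNiceColoring G k)
    (hmin : ∀ H : SimpleGraph V, H < G → HasNiceColoring H k)
    (u v x y z : V) (huv : u ≠ v)
    (hu3 : deg G u = 3) (hv3 : deg G v = 3)
    (hNu : G.neighborSet u = {x, y, z}) (hNv : G.neighborSet v = {x, y, z})
    (cv : V → Fin k) (ce : Sym2 V → Fin k)
    (hψ : IsNiceColoring (G.deleteEdges (G.incidenceSet u ∪ G.incidenceSet v)) k cv ce)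
    (Cx Cy Cz : Finset (Fin k))
    (hCx : Cx.card = 2) (hCy : Cy.card = 2) (hCz : Cz.card = 2)
    (hmx : ∀ c ∈ Cx,
      MissingAt (G.deleteEdges (G.incidenceSet u ∪ G.incidenceSet v)) cv ce x c)
    (hmy : ∀ c ∈ Cy,
      MissingAt (G.deleteEdges (G.incidenceSet u ∪ G.incidenceSet v)) cv ce y c)
    (hmz : ∀ c ∈ Cz,
      MissingAt (G.deleteEdges (G.incidenceSet u ∪ G.incidenceSet v)) cv ce z c) :
    (Cx ∩ Cy ∩ Cz).Nonempty :=
  missing_colors_intersect_general G k hk hG u v x y z hu3 hv3 hNu hNv cv ce hψ Cx Cy Cz hCx hCy hCz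
    hmx hmy hmz
end

section
/- Configuration E5 is reducible: if G is a graph with Δ(G) ≤ k−1 (k ≥ 11) containing two 3-vertices u, v, both adjacent to the same three vertices x, y, z with xy, yz, zx ∉ E(G), and the graph G − {u,v} + {xy, yz, zx} has a nice k-coloring, then G has a nice k-coloring. -/
open SimpleGraph

/-- Configuration `E₅` is reducible: if `u`, `v` are `3`-vertices with the same neighbors
`x`, `y`, `z`, no two of which are adjacent, and `G - {u,v} + {xy, yz, zx}` has a nice
`k`-coloring, then so does `G`. -/
theorem config_E5_reducible {V : Type*} [Fintype V] (G : SimpleGraph V) (k : ℕ)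
    (hk : 11 ≤ k) (hΔ : maxDeg G ≤ k - 1)
    (u v x y z : V) (huv : u ≠ v)
    (hu3 : deg G u = 3) (hv3 : deg G v = 3)
    (hNu : G.neighborSet u = {x, y, z}) (hNv : G.neighborSet v = {x, y, z})
    (hxy : ¬ G.Adj x y) (hyz : ¬ G.Adj y z) (hxz : ¬ G.Adj x z)
    (h : HasNiceColoring
      ((G.deleteEdges (G.incidenceSet u ∪ G.incidenceSet v)) ⊔
        SimpleGraph.fromEdgeSet {s(x, y), s(y, z), s(x, z)}) k) :
    HasNiceColoring G k := by
    classical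
  set G' := ((G.deleteEdges (G.incidenceSet u ∪ G.incidenceSet v)) ⊔
      SimpleGraph.fromEdgeSet {s(x, y), s(y, z), s(x, z)}) with hG'def
  obtain ⟨cv, ce, hψv, hψe, hψve⟩ := h
  -- basic adjacencies
  have hux : G.Adj u x := by rw [← SimpleGraph.mem_neighborSet, hNu]; simp
  have huy : G.Adj u y := by rw [← SimpleGraph.mem_neighborSet, hNu]; simp
  have huz : G.Adj u z := by rw [← SimpleGraph.mem_neighborSet, hNu]; simp
  have hvx : G.Adj v x := by rw [← SimpleGraph.mem_neighborSet, hNv]; simp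
  have hvy : G.Adj v y := by rw [← SimpleGraph.mem_neighborSet, hNv]; simp
  have hvz : G.Adj v z := by rw [← SimpleGraph.mem_neighborSet, hNv]; simp
  have hnux : u ≠ x := fun h' => G.irrefl (h' ▸ hux)
  have hnuy : u ≠ y := fun h' => G.irrefl (h' ▸ huy)
  have hnuz : u ≠ z := fun h' => G.irrefl (h' ▸ huz)
  have hnvx : v ≠ x := fun h' => G.irrefl (h' ▸ hvx)
  have hnvy : v ≠ y := fun h' => G.irrefl (h' ▸ hvy)
  have hnvz : v ≠ z := fun h' => G.irrefl (h' ▸ hvz)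
  -- x, y, z pairwise distinct
  have hcard : ({x, y, z} : Set V).ncard = 3 := by rw [← hNu]; exact hu3
  have hpair : ∀ a b : V, ({a, b} : Set V).ncard ≤ 2 := fun a b =>
    le_trans (Set.ncard_insert_le _ _) (by simp)
  have hnxy : x ≠ y := by
    rintro rfl; rw [Set.insert_idem] at hcard; have := hpair x z; omega
  have hnyz : y ≠ z := by
    rintro rfl; rw [Set.pair_eq_singleton] at hcard; have := hpair x y; omega
  have hnxz : x ≠ z := by
    rintro rfl; rw [Set.insert_comm, Set.pair_eq_singleton] at hcard
    have := hpair y x; omega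
  -- neighbors of u and v
  have hNu' : ∀ b, G.Adj u b ↔ (b = x ∨ b = y ∨ b = z) := by
    intro b; rw [← SimpleGraph.mem_neighborSet, hNu]; simp
  have hNv' : ∀ b, G.Adj v b ↔ (b = x ∨ b = y ∨ b = z) := by
    intro b; rw [← SimpleGraph.mem_neighborSet, hNv]; simp
  -- adjacency in G'
  have hadj' : ∀ a b : V, G'.Adj a b ↔
      (G.Adj a b ∧ b ≠ u ∧ b ≠ v ∧ a ≠ u ∧ a ≠ v) ∨
      (a ≠ b ∧ (s(a, b) = s(x, y) ∨ s(a, b) = s(y, z) ∨ s(a, b) = s(x, z))) := by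
    intro a b
    rw [hG'def]
    simp only [SimpleGraph.sup_adj, SimpleGraph.deleteEdges_adj, Set.mem_union,
      SimpleGraph.mk'_mem_incidenceSet_iff, SimpleGraph.fromEdgeSet_adj,
      Set.mem_insert_iff, Set.mem_singleton_iff]
    constructor
    · rintro (⟨hab, hn⟩ | ⟨he, hne⟩)
      · exact Or.inl ⟨hab, fun h' => hn (Or.inl ⟨hab, Or.inr h'.symm⟩),
          fun h' => hn (Or.inr ⟨hab, Or.inr h'.symm⟩),
          fun h' => hn (Or.inl ⟨hab, Or.inl h'.symm⟩),
          fun h' => hn (Or.inr ⟨hab, Or.inl h'.symm⟩)⟩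
      · exact Or.inr ⟨hne, he⟩
    · rintro (⟨hab, h1, h2, h3, h4⟩ | ⟨hne, he⟩)
      · refine Or.inl ⟨hab, ?_⟩
        rintro (⟨-, (h' | h')⟩ | ⟨-, (h' | h')⟩)
        exacts [h3 h'.symm, h1 h'.symm, h4 h'.symm, h2 h'.symm]
      · exact Or.inr ⟨he, hne⟩
  have hpres : ∀ a b : V, G.Adj a b → a ≠ u → a ≠ v → b ≠ u → b ≠ v → G'.Adj a b :=
    fun a b hab h1 h2 h3 h4 => (hadj' a b).2 (Or.inl ⟨hab, h3, h4, h1, h2⟩)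
  have hxy' : G'.Adj x y := (hadj' x y).2 (Or.inr ⟨hnxy, Or.inl rfl⟩)
  have hyz' : G'.Adj y z := (hadj' y z).2 (Or.inr ⟨hnyz, Or.inr (Or.inl rfl)⟩)
  have hxz' : G'.Adj x z := (hadj' x z).2 (Or.inr ⟨hnxz, Or.inr (Or.inr rfl)⟩)
  -- triangle colors pairwise distinct
  have hc1 : ce s(x, y) ≠ ce s(y, z) := by
    have := hψe y x z hxy'.symm hyz' hnxz
    rwa [show s(y, x) = s(x, y) from Sym2.eq_swap] at this
  have hc2 : ce s(x, y) ≠ ce s(x, z) := hψe x y z hxy' hxz' hnyz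
  have hc3 : ce s(y, z) ≠ ce s(x, z) := by
    have := hψe z y x hyz'.symm hxz'.symm hnxy.symm
    rwa [show s(z, y) = s(y, z) from Sym2.eq_swap,
      show s(z, x) = s(x, z) from Sym2.eq_swap] at this
  -- neighbor sets of x, y, z in G'
  have hsetx : G'.neighborSet x = insert y (insert z (G.neighborSet x \ {u, v})) := by
    ext b
    simp only [SimpleGraph.mem_neighborSet, hadj', Set.mem_insert_iff, Set.mem_diff,
      Set.mem_singleton_iff, Sym2.eq_iff]
    constructor
    · rintro (⟨hab, h1, h2, -, -⟩ | ⟨-, hor⟩)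
      · exact Or.inr (Or.inr ⟨hab, fun h' => h'.elim h1 h2⟩)
      · rcases hor with (⟨-, rfl⟩ | ⟨h', -⟩) | (⟨h', -⟩ | ⟨h', -⟩) | (⟨-, rfl⟩ | ⟨h', -⟩)
        exacts [Or.inl rfl, absurd h' hnxy, absurd h' hnxy, absurd h' hnxz,
          Or.inr (Or.inl rfl), absurd h' hnxz]
    · rintro (rfl | rfl | ⟨hab, hn⟩)
      · exact Or.inr ⟨hnxy, by simp⟩
      · exact Or.inr ⟨hnxz, by simp⟩
      · exact Or.inl ⟨hab, fun h' => hn (Or.inl h'), fun h' => hn (Or.inr h'),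
          hnux.symm, hnvx.symm⟩
  have hsety : G'.neighborSet y = insert x (insert z (G.neighborSet y \ {u, v})) := by
    ext b
    simp only [SimpleGraph.mem_neighborSet, hadj', Set.mem_insert_iff, Set.mem_diff,
      Set.mem_singleton_iff, Sym2.eq_iff]
    constructor
    · rintro (⟨hab, h1, h2, -, -⟩ | ⟨-, hor⟩)
      · exact Or.inr (Or.inr ⟨hab, fun h' => h'.elim h1 h2⟩)
      · rcases hor with (⟨h', -⟩ | ⟨-, rfl⟩) | (⟨-, rfl⟩ | ⟨h', -⟩) | (⟨h', -⟩ | ⟨h', -⟩)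
        exacts [absurd h'.symm hnxy, Or.inl rfl, Or.inr (Or.inl rfl), absurd h' hnyz,
          absurd h'.symm hnxy, absurd h' hnyz]
    · rintro (rfl | rfl | ⟨hab, hn⟩)
      · exact Or.inr ⟨hnxy.symm, by simp⟩
      · exact Or.inr ⟨hnyz, by simp⟩
      · exact Or.inl ⟨hab, fun h' => hn (Or.inl h'), fun h' => hn (Or.inr h'),
          hnuy.symm, hnvy.symm⟩
  have hsetz : G'.neighborSet z = insert x (insert y (G.neighborSet z \ {u, v})) := by
    ext b
    simp only [SimpleGraph.mem_neighborSet, hadj', Set.mem_insert_iff, Set.mem_diff,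
      Set.mem_singleton_iff, Sym2.eq_iff]
    constructor
    · rintro (⟨hab, h1, h2, -, -⟩ | ⟨-, hor⟩)
      · exact Or.inr (Or.inr ⟨hab, fun h' => h'.elim h1 h2⟩)
      · rcases hor with (⟨h', -⟩ | ⟨h', -⟩) | (⟨h', -⟩ | ⟨-, rfl⟩) | (⟨h', -⟩ | ⟨-, rfl⟩)
        exacts [absurd h'.symm hnxz, absurd h'.symm hnyz, absurd h'.symm hnyz,
          Or.inr (Or.inl rfl), absurd h'.symm hnxz, Or.inl rfl]
    · rintro (rfl | rfl | ⟨hab, hn⟩)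
      · exact Or.inr ⟨hnxz.symm, by simp⟩
      · exact Or.inr ⟨hnyz.symm, by simp⟩
      · exact Or.inl ⟨hab, fun h' => hn (Or.inl h'), fun h' => hn (Or.inr h'),
          hnuz.symm, hnvz.symm⟩
  -- degrees preserved away from u, v
  have hdiffcard : ∀ (w : V), G.Adj w u → G.Adj w v →
      (G.neighborSet w \ {u, v}).ncard + 2 = (G.neighborSet w).ncard := by
    intro w h1 h2
    have hsub : ({u, v} : Set V) ⊆ G.neighborSet w := by
      rintro w' (rfl | rfl)
      exacts [h1, h2]
    have hge : 2 ≤ (G.neighborSet w).ncard := by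
      have := Set.ncard_le_ncard hsub
      rwa [Set.ncard_pair huv] at this
    rw [Set.ncard_diff hsub, Set.ncard_pair huv]
    omega
  have hdeg : ∀ w, w ≠ u → w ≠ v → deg G' w = deg G w := by
    intro w hwu hwv
    show (G'.neighborSet w).ncard = (G.neighborSet w).ncard
    by_cases hwx : w = x
    · subst hwx
      have h1 : y ∉ insert z (G.neighborSet w \ {u, v}) := by
        intro hm
        rcases Set.mem_insert_iff.1 hm with h' | h'
        exacts [hnyz h', hxy h'.1]
      have h2 : z ∉ G.neighborSet w \ {u, v} := fun h' => hxz h'.1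
      rw [hsetx, Set.ncard_insert_of_notMem h1, Set.ncard_insert_of_notMem h2,
        ← hdiffcard w hux.symm hvx.symm]
    · by_cases hwy : w = y
      · subst hwy
        have h1 : x ∉ insert z (G.neighborSet w \ {u, v}) := by
          intro hm
          rcases Set.mem_insert_iff.1 hm with h' | h'
          exacts [hnxz h', hxy h'.1.symm]
        have h2 : z ∉ G.neighborSet w \ {u, v} := fun h' => hyz h'.1
        rw [hsety, Set.ncard_insert_of_notMem h1, Set.ncard_insert_of_notMem h2,
          ← hdiffcard w huy.symm hvy.symm]
      · by_cases hwz : w = z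
        · subst hwz
          have h1 : x ∉ insert y (G.neighborSet w \ {u, v}) := by
            intro hm
            rcases Set.mem_insert_iff.1 hm with h' | h'
            exacts [hnxy h', hxz h'.1.symm]
          have h2 : y ∉ G.neighborSet w \ {u, v} := fun h' => hyz h'.1.symm
          rw [hsetz, Set.ncard_insert_of_notMem h1, Set.ncard_insert_of_notMem h2,
            ← hdiffcard w huz.symm hvz.symm]
        · -- generic vertex
          have hset : G'.neighborSet w = G.neighborSet w := by
            ext b
            simp only [SimpleGraph.mem_neighborSet, hadj', Sym2.eq_iff]
            constructor
            · rintro (⟨hab, -⟩ | ⟨-, hor⟩)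
              · exact hab
              · rcases hor with (⟨h', -⟩ | ⟨h', -⟩) | (⟨h', -⟩ | ⟨h', -⟩) | (⟨h', -⟩ | ⟨h', -⟩)
                exacts [absurd h' hwx, absurd h' hwy, absurd h' hwy, absurd h' hwz,
                  absurd h' hwx, absurd h' hwz]
            · intro hab
              refine Or.inl ⟨hab, ?_, ?_, hwu, hwv⟩ <;> rintro rfl
              · rcases (hNu' w).1 hab.symm with h' | h' | h'
                exacts [hwx h', hwy h', hwz h']
              · rcases (hNv' w).1 hab.symm with h' | h' | h'
                exacts [hwx h', hwy h', hwz h']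
          rw [hset]
  -- helpers for Sym2 inequalities
  have sym2_ne2 : ∀ a b c d : V, a ≠ c → b ≠ c → s(a, b) ≠ s(c, d) := by
    intro a b c d h1 h2 he
    rw [Sym2.eq_iff] at he
    rcases he with ⟨h', -⟩ | ⟨-, h'⟩
    exacts [h1 h', h2 h']
  have sym2_ne' : ∀ a b d : V, b ≠ d → a ≠ d → s(a, b) ≠ s(a, d) := by
    intro a b d h1 h2 he
    rw [Sym2.eq_iff] at he
    rcases he with ⟨-, h'⟩ | ⟨h', -⟩
    exacts [h1 h', h2 h']
  -- the new edge coloring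
  set ce' : Sym2 V → Fin k := fun e =>
    if e = s(u, x) ∨ e = s(v, y) then ce s(x, y)
    else if e = s(u, y) ∨ e = s(v, z) then ce s(y, z)
    else if e = s(u, z) ∨ e = s(v, x) then ce s(x, z)
    else ce e with hce'
  have hval : ∀ e : Sym2 V, ce' e =
      (if e = s(u, x) ∨ e = s(v, y) then ce s(x, y)
       else if e = s(u, y) ∨ e = s(v, z) then ce s(y, z)
       else if e = s(u, z) ∨ e = s(v, x) then ce s(x, z)
       else ce e) := fun e => rfl
  have hux' : ce' s(u, x) = ce s(x, y) := by rw [hval, if_pos (Or.inl rfl)]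
  have hvy' : ce' s(v, y) = ce s(x, y) := by rw [hval, if_pos (Or.inr rfl)]
  have huy' : ce' s(u, y) = ce s(y, z) := by
    rw [hval, if_neg, if_pos (Or.inl rfl)]
    rintro (h' | h')
    exacts [sym2_ne' u y x hnxy.symm hnux h', sym2_ne2 u y v y huv hnvy.symm h']
  have hvz' : ce' s(v, z) = ce s(y, z) := by
    rw [hval, if_neg, if_pos (Or.inr rfl)]
    rintro (h' | h')
    exacts [sym2_ne2 v z u x huv.symm hnuz.symm h', sym2_ne' v z y hnyz.symm hnvy h']
  have huz' : ce' s(u, z) = ce s(x, z) := by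
    rw [hval, if_neg, if_neg, if_pos (Or.inl rfl)]
    · rintro (h' | h')
      exacts [sym2_ne' u z y hnyz.symm hnuy h', sym2_ne2 u z v z huv hnvz.symm h']
    · rintro (h' | h')
      exacts [sym2_ne' u z x hnxz.symm hnux h', sym2_ne2 u z v y huv hnvz.symm h']
  have hvx' : ce' s(v, x) = ce s(x, z) := by
    rw [hval, if_neg, if_neg, if_pos (Or.inr rfl)]
    · rintro (h' | h')
      exacts [sym2_ne2 v x u y huv.symm hnux.symm h', sym2_ne' v x z hnxz hnvz h']
    · rintro (h' | h')
      exacts [sym2_ne2 v x u x huv.symm hnux.symm h', sym2_ne' v x y hnxy hnvy h']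
  have hgen : ∀ a b : V, a ≠ u → a ≠ v → b ≠ u → b ≠ v → ce' s(a, b) = ce s(a, b) := by
    intro a b h1 h2 h3 h4
    rw [hval, if_neg, if_neg, if_neg]
    · rintro (h' | h')
      exacts [sym2_ne2 a b u z h1 h3 h', sym2_ne2 a b v x h2 h4 h']
    · rintro (h' | h')
      exacts [sym2_ne2 a b u y h1 h3 h', sym2_ne2 a b v z h2 h4 h']
    · rintro (h' | h')
      exacts [sym2_ne2 a b u x h1 h3 h', sym2_ne2 a b v y h2 h4 h']
  -- main helper for edge condition at x, y, z
  have hmain : ∀ p q r : V, G'.Adj p q → G'.Adj p r → ¬ G.Adj p q → ¬ G.Adj p r →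
      q ≠ r → p ≠ u → p ≠ v →
      ce' s(p, u) = ce s(p, q) → ce' s(p, v) = ce s(p, r) →
      ∀ b c, G.Adj p b → G.Adj p c → b ≠ c → ce' s(p, b) ≠ ce' s(p, c) := by
    intro p q r hpq hpr hnpq hnpr hqr hpu hpv hcu hcv b c hb hc hbc
    have himg : ∀ b, G.Adj p b → ∃ b', G'.Adj p b' ∧ ce' s(p, b) = ce s(p, b') ∧
        ((b = u ∧ b' = q) ∨ (b = v ∧ b' = r) ∨ (b' = b ∧ b ≠ u ∧ b ≠ v)) := by
      intro b hb
      by_cases h1 : b = u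
      · exact ⟨q, hpq, by rw [h1]; exact hcu, Or.inl ⟨h1, rfl⟩⟩
      by_cases h2 : b = v
      · exact ⟨r, hpr, by rw [h2]; exact hcv, Or.inr (Or.inl ⟨h2, rfl⟩)⟩
      · exact ⟨b, hpres p b hb hpu hpv h1 h2, hgen p b hpu hpv h1 h2,
          Or.inr (Or.inr ⟨rfl, h1, h2⟩)⟩
    obtain ⟨b', hb', hcb, hib⟩ := himg b hb
    obtain ⟨c', hc', hcc, hic⟩ := himg c hc
    rw [hcb, hcc]
    refine hψe p b' c' hb' hc' ?_
    rcases hib with ⟨rfl, rfl⟩ | ⟨rfl, rfl⟩ | ⟨rfl, h1, h2⟩ <;>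
      rcases hic with ⟨rfl, rfl⟩ | ⟨rfl, rfl⟩ | ⟨rfl, h3, h4⟩
    · exact absurd rfl hbc
    · exact hqr
    · exact fun h' => hnpq (h' ▸ hc)
    · exact hqr.symm
    · exact absurd rfl hbc
    · exact fun h' => hnpr (h' ▸ hc)
    · exact fun h' => hnpq ((h'.symm) ▸ hb)
    · exact fun h' => hnpr ((h'.symm) ▸ hb)
    · exact hbc
  -- values at x, y, z towards u, v
  have hXu : ce' s(x, u) = ce s(x, y) := by
    rw [show s(x, u) = s(u, x) from Sym2.eq_swap, hux']
  have hXv : ce' s(x, v) = ce s(x, z) := by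
    rw [show s(x, v) = s(v, x) from Sym2.eq_swap, hvx']
  have hYu : ce' s(y, u) = ce s(y, z) := by
    rw [show s(y, u) = s(u, y) from Sym2.eq_swap, huy']
  have hYv : ce' s(y, v) = ce s(y, x) := by
    rw [show s(y, v) = s(v, y) from Sym2.eq_swap, hvy',
      show s(x, y) = s(y, x) from Sym2.eq_swap]
  have hZu : ce' s(z, u) = ce s(z, x) := by
    rw [show s(z, u) = s(u, z) from Sym2.eq_swap, huz',
      show s(x, z) = s(z, x) from Sym2.eq_swap]
  have hZv : ce' s(z, v) = ce s(z, y) := by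
    rw [show s(z, v) = s(v, z) from Sym2.eq_swap, hvz',
      show s(y, z) = s(z, y) from Sym2.eq_swap]
  refine ⟨cv, ce', ?_, ?_, ?_⟩
  · -- vertex condition
    intro a b hab ha hb
    have hau : a ≠ u := by rintro rfl; rw [hu3] at ha; omega
    have hav : a ≠ v := by rintro rfl; rw [hv3] at ha; omega
    have hbu : b ≠ u := by rintro rfl; rw [hu3] at hb; omega
    have hbv : b ≠ v := by rintro rfl; rw [hv3] at hb; omega
    exact hψv a b (hpres a b hab hau hav hbu hbv)
      (by rw [hdeg a hau hav]; exact ha) (by rw [hdeg b hbu hbv]; exact hb)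
  · -- edge condition
    intro a b c hab hac hbc
    by_cases hau : a = u
    · subst hau
      rcases (hNu' b).1 hab with rfl | rfl | rfl <;>
        rcases (hNu' c).1 hac with rfl | rfl | rfl <;>
        simp only [hux', huy', huz'] <;>
        first
          | exact absurd rfl hbc
          | exact hc1 | exact hc1.symm | exact hc2 | exact hc2.symm
          | exact hc3 | exact hc3.symm
    by_cases hav : a = v
    · subst hav
      rcases (hNv' b).1 hab with rfl | rfl | rfl <;>
        rcases (hNv' c).1 hac with rfl | rfl | rfl <;>
        simp only [hvx', hvy', hvz'] <;>
        first
          | exact absurd rfl hbc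
          | exact hc1 | exact hc1.symm | exact hc2 | exact hc2.symm
          | exact hc3 | exact hc3.symm
    by_cases hax : a = x
    · subst hax
      exact hmain a y z hxy' hxz' hxy hxz hnyz hau hav hXu hXv b c hab hac hbc
    by_cases hay : a = y
    · subst hay
      exact hmain a z x hyz' hxy'.symm hyz (fun h' => hxy h'.symm) hnxz.symm hau hav
        hYu hYv b c hab hac hbc
    by_cases haz : a = z
    · subst haz
      exact hmain a x y hxz'.symm hyz'.symm (fun h' => hxz h'.symm)
        (fun h' => hyz h'.symm) hnxy hau hav hZu hZv b c hab hac hbc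
    · have hne : ∀ w, G.Adj a w → w ≠ u ∧ w ≠ v := by
        intro w hw
        constructor <;> rintro rfl
        · rcases (hNu' a).1 hw.symm with h' | h' | h'
          exacts [hax h', hay h', haz h']
        · rcases (hNv' a).1 hw.symm with h' | h' | h'
          exacts [hax h', hay h', haz h']
      obtain ⟨hbu, hbv⟩ := hne b hab
      obtain ⟨hcu, hcv⟩ := hne c hac
      rw [hgen a b hau hav hbu hbv, hgen a c hau hav hcu hcv]
      exact hψe a b c (hpres a b hab hau hav hbu hbv) (hpres a c hac hau hav hcu hcv) hbc
  · -- vertex-edge condition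
    intro a b hab ha
    have hau : a ≠ u := by rintro rfl; rw [hu3] at ha; omega
    have hav : a ≠ v := by rintro rfl; rw [hv3] at ha; omega
    have hdg : 6 ≤ deg G' a := by rw [hdeg a hau hav]; exact ha
    by_cases hbu : b = u
    · subst hbu
      rcases (hNu' a).1 hab.symm with rfl | rfl | rfl
      · rw [hXu]; exact hψve a y hxy' hdg
      · rw [hYu]; exact hψve a z hyz' hdg
      · rw [hZu]; exact hψve a x hxz'.symm hdg
    by_cases hbv : b = v
    · subst hbv
      rcases (hNv' a).1 hab.symm with rfl | rfl | rfl
      · rw [hXv]; exact hψve a z hxz' hdg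
      · rw [hYv]; exact hψve a x hxy'.symm hdg
      · rw [hZv]; exact hψve a y hyz'.symm hdg
    · rw [hgen a b hau hav hbu hbv]
      exact hψve a b (hpres a b hab hau hav hbu hbv) hdg
end
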